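/- Let d ≥ 1 be a natural number, let F_d := ∏_{i=0}^{d} (1 + (d−i)·X + i·Y) in ℤ[X,Y], and let 1 ≤ j ≤ d. Then there exist a positive integer a_j and a two-variable polynomial Q ∈ ℤ[S,T] all of whose coefficients are nonnegative such that the homogeneous component of degree j of F_d (with X and Y each of degree 1) equals a_j·(X+Y)^j + (X·Y)·Q(e₁, e₂), where e₁ = X+Y and e₂ = X·Y. In Chern-class terms: for j ≤ d, the class c_j(Sym^d) of a rank-2 bundle equals a_j·c₁^j plus a polynomial in c₁, c₂ with nonnegative coefficients each of whose monomials involves c₂. -/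

import Mathlib

open MvPolynomial Finset

/-- `Xp` is the first Chern root. -/
noncomputable def Xp : MvPolynomial (Fin 2) ℤ := MvPolynomial.X 0
/-- `Yp` is the second Chern root. -/
noncomputable def Yp : MvPolynomial (Fin 2) ℤ := MvPolynomial.X 1

/-- `F d` is the total Chern class of `Sym^d` of a rank-2 bundle with Chern
roots `X`, `Y`. -/
noncomputable def F (d : ℕ) : MvPolynomial (Fin 2) ℤ :=
  ∏ i ∈ Finset.range (d + 1), (1 + C ((d : ℤ) - (i : ℤ)) * Xp + C (i : ℤ) * Yp)

/-- `e₁ = X + Y` plays the role of `c₁`. -/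
noncomputable def e1 : MvPolynomial (Fin 2) ℤ := Xp + Yp
/-- `e₂ = X·Y` plays the role of `c₂`. -/
noncomputable def e2 : MvPolynomial (Fin 2) ℤ := Xp * Yp

/-!
Pairing the outermost factors, `(u + dX)(u + dY) = u² + d·u·e₁ + d²·e₂`, while the remaining
factors form the same product for `d - 2` with `u` replaced by `u + e₁`; by induction
`F_d = P(e₁, e₂)` for a polynomial `P` with nonnegative coefficients. Giving `e₁` weight 1 and
`e₂` weight 2, the degree-`j` part of `F_d` is the image of the weight-`j` part of `P`, whose
monomials are `S^j` or divisible by `T`. The coefficient `a` of `S^j` is read off by setting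
`Y = 0`: then `F_d` becomes `∏_{k=1}^{d} (1 + kX)`, whose coefficient of `X^j` is positive for
`j ≤ d`.
-/

namespace MvPolynomial

section NonnegCoeffs

variable (σ R : Type*) [CommSemiring R] [PartialOrder R] [IsOrderedRing R]

def nonnegCoeffs : Subsemiring (MvPolynomial σ R) where
  carrier := {p | ∀ m, 0 ≤ p.coeff m}
  zero_mem' m := by simp
  one_mem' m := by
    classical
    rw [coeff_one]
    split_ifs <;> simp
  add_mem' hp hq m := by
    rw [coeff_add]
    exact add_nonneg (hp m) (hq m)
  mul_mem' hp hq m := by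
    classical
    rw [coeff_mul]
    exact Finset.sum_nonneg fun x _ => mul_nonneg (hp _) (hq _)

variable {σ R}

theorem mem_nonnegCoeffs {p : MvPolynomial σ R} : p ∈ nonnegCoeffs σ R ↔ ∀ m, 0 ≤ p.coeff m :=
  Iff.rfl

theorem X_mem_nonnegCoeffs (i : σ) : X i ∈ nonnegCoeffs σ R := fun m => by
  classical
  rw [coeff_X]
  split_ifs <;> simp

end NonnegCoeffs

section Homogeneous

variable {σ τ R : Type*} [CommSemiring R]

theorem isHomogeneous_aeval_monomial {g : σ → MvPolynomial τ R} {w : σ → ℕ}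
    (hg : ∀ i, (g i).IsHomogeneous (w i)) (s : σ →₀ ℕ) (r : R) :
    (aeval g (monomial s r)).IsHomogeneous (Finsupp.weight w s) := by
  rw [aeval_monomial, Finsupp.weight_apply, ← zero_add (s.sum _)]
  exact (isHomogeneous_C _ _).mul (IsHomogeneous.prod _ _ _ fun i _ => by
    simpa [mul_comm] using (hg i).pow (s i))

theorem homogeneousComponent_aeval {g : σ → MvPolynomial τ R} {w : σ → ℕ}
    (hg : ∀ i, (g i).IsHomogeneous (w i)) (n : ℕ) (p : MvPolynomial σ R) :
    homogeneousComponent n (aeval g p) = aeval g (weightedHomogeneousComponent w n p) := by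
  classical
  suffices homogeneousComponent n ∘ₗ (aeval g).toLinearMap =
      (aeval g).toLinearMap ∘ₗ weightedHomogeneousComponent w n from
    LinearMap.congr_fun this p
  refine linearMap_ext fun s => LinearMap.ext fun r => ?_
  simp only [LinearMap.comp_apply, AlgHom.toLinearMap_apply]
  rw [homogeneousComponent_of_mem (isHomogeneous_aeval_monomial hg s r),
    weightedHomogeneousComponent_of_mem (isWeightedHomogeneous_monomial w s r rfl)]
  split_ifs <;> simp

end Homogeneous

theorem eq_monomial_add_X_one_mul_divMonomial {R : Type*} [CommSemiring R]
    {w : Fin 2 → ℕ} (hw : w 0 = 1) {p : MvPolynomial (Fin 2) R} {n : ℕ}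
    (hp : p.IsWeightedHomogeneous w n) :
    p = monomial (Finsupp.single 0 n) (p.coeff (Finsupp.single 0 n)) +
      X 1 * p.divMonomial (Finsupp.single 1 1) := by
  classical
  ext m
  rw [coeff_add, coeff_X_mul', coeff_monomial, coeff_divMonomial]
  by_cases hm1 : m 1 = 0
  · have hm : m = Finsupp.single 0 (m 0) := by
      ext i; fin_cases i <;> simp [hm1]
    simp only [Finsupp.mem_support_iff, hm1, ne_eq, not_true_eq_false, if_false, add_zero]
    by_cases hm0 : m 0 = n
    · rw [hm, hm0, if_pos rfl]
    · rw [if_neg (by rw [hm]; exact (Finsupp.single_injective 0).ne (Ne.symm hm0))]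
      by_contra hne
      have hwm := hp hne
      rw [hm, Finsupp.weight_single, hw, smul_eq_mul, mul_one] at hwm
      exact hm0 hwm
  · have hle : Finsupp.single 1 1 ≤ m := by
      simpa [Finsupp.single_le_iff] using Nat.one_le_iff_ne_zero.2 hm1
    rw [if_neg (by rintro rfl; simp at hm1), zero_add,
      if_pos (Finsupp.mem_support_iff.2 hm1), add_tsub_cancel_of_le hle]

theorem coeff_aeval_piSingle_X {σ R : Type*} [CommSemiring R] [DecidableEq σ]
    (i : σ) (p : MvPolynomial σ R) (n : ℕ) :
    (aeval (Pi.single i Polynomial.X) p).coeff n = p.coeff (Finsupp.single i n) := by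
  induction p using MvPolynomial.induction_on' with
  | monomial s r =>
    rw [aeval_monomial, coeff_monomial, ← Polynomial.C_eq_algebraMap]
    by_cases hs : s = Finsupp.single i (s i)
    · rw [hs, Finsupp.prod_single_index (by simp), Pi.single_eq_same,
        Polynomial.coeff_C_mul_X_pow]
      simp only [(Finsupp.single_injective i).eq_iff, eq_comm]
    · obtain ⟨j, hji, hj⟩ : ∃ j, j ≠ i ∧ s j ≠ 0 := by
        by_contra! h
        refine hs (Finsupp.ext fun j => ?_)
        by_cases hji : j = i
        · simp [hji]
        · simp [h j hji, Finsupp.single_eq_of_ne hji]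
      rw [Finsupp.prod, Finset.prod_eq_zero (Finsupp.mem_support_iff.2 hj)
        (by rw [Pi.single_eq_of_ne hji, zero_pow hj]), mul_zero, Polynomial.coeff_zero,
        if_neg (by rintro rfl; simp [Finsupp.single_eq_of_ne hji] at hj)]
  | add p q hp hq => simp [hp, hq]

end MvPolynomial

theorem Polynomial.coeff_prod_one_add_C_mul_X_pos {ι R : Type*} [CommSemiring R] [PartialOrder R]
    [IsStrictOrderedRing R] (s : Finset ι) (a : ι → R) (ha : ∀ i ∈ s, 0 < a i) {k : ℕ}
    (hk : k ≤ s.card) : 0 < (∏ i ∈ s, (1 + C (a i) * X)).coeff k := by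
  classical
  suffices ∀ k, 0 ≤ (∏ i ∈ s, (1 + C (a i) * X)).coeff k ∧
      (k ≤ s.card → 0 < (∏ i ∈ s, (1 + C (a i) * X)).coeff k) from (this k).2 hk
  clear hk k
  induction s using Finset.induction_on with
  | empty => intro k; cases k <;> simp [coeff_one]
  | insert j s hj ih =>
    intro k
    have hp := ih fun i hi => ha i (Finset.mem_insert_of_mem hi)
    have haj : 0 < a j := ha j (Finset.mem_insert_self j s)
    rw [Finset.prod_insert hj, Finset.card_insert_of_notMem hj, add_mul, one_mul, mul_assoc,
      coeff_add, coeff_C_mul]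
    cases k with
    | zero =>
      rw [coeff_X_mul_zero, mul_zero, add_zero]
      exact ⟨(hp 0).1, fun _ => (hp 0).2 (Nat.zero_le _)⟩
    | succ k =>
      rw [coeff_X_mul]
      refine ⟨add_nonneg (hp _).1 (mul_nonneg haj.le (hp k).1), fun hk => ?_⟩
      exact add_pos_of_nonneg_of_pos (hp _).1 (mul_pos haj ((hp k).2 (by omega)))

theorem Subsemiring.prod_range_add_mul_add_mul_mem {A : Type*} [CommRing A] (S : Subsemiring A)
    {x y : A} (hadd : x + y ∈ S) (hmul : x * y ∈ S) (d : ℕ) {u : A} (hu : u ∈ S) :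
    ∏ i ∈ Finset.range (d + 1), (u + ((d : A) - i) * x + i * y) ∈ S := by
  induction d using Nat.twoStepInduction generalizing u with
  | zero => simpa using hu
  | one =>
    have h : ∏ i ∈ Finset.range 2, (u + (((1 : ℕ) : A) - i) * x + i * y) =
        u * u + u * (x + y) + x * y := by
      simp [Finset.prod_range_succ]; ring
    rw [h]
    exact S.add_mem (S.add_mem (S.mul_mem hu hu) (S.mul_mem hu hadd)) hmul
  | more n ih _ =>
    have hinner : ∀ i ∈ Finset.range (n + 1),
        u + (((n + 2 : ℕ) : A) - (i + 1 : ℕ)) * x + (i + 1 : ℕ) * y =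
          (u + (x + y)) + ((n : A) - i) * x + i * y := by
      intro i _; push_cast; ring
    have houter : (u + (((n + 2 : ℕ) : A) - (n + 1 + 1 : ℕ)) * x + (n + 1 + 1 : ℕ) * y) *
        (u + (((n + 2 : ℕ) : A) - (0 : ℕ)) * x + (0 : ℕ) * y) =
          u * u + (n + 2 : ℕ) * (u * (x + y)) + ((n + 2 : ℕ) * (n + 2 : ℕ)) * (x * y) := by
      push_cast; ring
    rw [Finset.prod_range_succ', Finset.prod_range_succ, Finset.prod_congr rfl hinner, mul_assoc,
      houter]
    have hn : ((n + 2 : ℕ) : A) ∈ S := natCast_mem S _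
    exact S.mul_mem (ih (S.add_mem hu hadd)) (S.add_mem (S.add_mem (S.mul_mem hu hu)
      (S.mul_mem hn (S.mul_mem hu hadd))) (S.mul_mem (S.mul_mem hn hn) hmul))

theorem F_eq_prod (d : ℕ) :
    F d = ∏ i ∈ Finset.range (d + 1), (1 + ((d : MvPolynomial (Fin 2) ℤ) - i) * Xp + i * Yp) := by
  simp [F]

theorem exists_nonnegCoeffs_aeval_eq_F (d : ℕ) :
    ∃ Q ∈ nonnegCoeffs (Fin 2) ℤ, aeval ![e1, e2] Q = F d := by
  have hX (i : Fin 2) : ![e1, e2] i ∈ (nonnegCoeffs (Fin 2) ℤ).map (aeval ![e1, e2]).toRingHom :=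
    ⟨X i, X_mem_nonnegCoeffs i, by simp⟩
  rw [F_eq_prod]
  exact Subsemiring.mem_map.1 <|
    Subsemiring.prod_range_add_mul_add_mul_mem _ (hX 0) (hX 1) d (Subsemiring.one_mem _)

theorem isHomogeneous_e (i : Fin 2) : (![e1, e2] i).IsHomogeneous (![1, 2] i) := by
  fin_cases i
  · exact (isHomogeneous_X _ _).add (isHomogeneous_X _ _)
  · exact (isHomogeneous_X _ _).mul (isHomogeneous_X _ _)

theorem aeval_piSingle_X_F (d : ℕ) :
    aeval (Pi.single 0 Polynomial.X : Fin 2 → Polynomial ℤ) (F d) =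
      ∏ i ∈ Finset.range d, (1 + Polynomial.C ((d : ℤ) - i) * Polynomial.X) := by
  simp [F, Finset.prod_range_succ, Xp, Yp]

theorem aeval_piSingle_X_aeval_e (Q : MvPolynomial (Fin 2) ℤ) :
    aeval (Pi.single 0 Polynomial.X : Fin 2 → Polynomial ℤ) (aeval ![e1, e2] Q) =
      aeval (Pi.single 0 Polynomial.X) Q := by
  rw [← AlgHom.comp_apply, comp_aeval]
  congr 2
  ext i : 1
  fin_cases i <;> simp [e1, e2, Xp, Yp]

theorem stmt4_general (d j : ℕ) (hjd : j ≤ d) :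
    ∃ (a : ℤ) (Q : MvPolynomial (Fin 2) ℤ),
      0 < a ∧ (∀ m, 0 ≤ Q.coeff m) ∧
      MvPolynomial.homogeneousComponent j (F d) =
        C a * e1 ^ j + e2 * MvPolynomial.aeval ![e1, e2] Q := by
  obtain ⟨P, hP, hPF⟩ := exists_nonnegCoeffs_aeval_eq_F d
  set R := weightedHomogeneousComponent ![1, 2] j P
  have hR : R.coeff (Finsupp.single 0 j) = P.coeff (Finsupp.single 0 j) := by
    simp [R, coeff_weightedHomogeneousComponent, Finsupp.weight_single]
  refine ⟨P.coeff (Finsupp.single 0 j), R.divMonomial (Finsupp.single 1 1), ?_, fun m => ?_, ?_⟩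
  · calc 0 < (∏ i ∈ Finset.range d, (1 + Polynomial.C ((d : ℤ) - i) * Polynomial.X)).coeff j :=
          Polynomial.coeff_prod_one_add_C_mul_X_pos _ _
            (fun i hi => sub_pos.2 (by simpa using hi)) (by simpa using hjd)
      _ = P.coeff (Finsupp.single 0 j) := by
          rw [← aeval_piSingle_X_F, ← hPF, aeval_piSingle_X_aeval_e, coeff_aeval_piSingle_X]
  · rw [coeff_divMonomial, coeff_weightedHomogeneousComponent]
    split_ifs
    exacts [mem_nonnegCoeffs.1 hP _, le_rfl]
  · rw [← hPF, homogeneousComponent_aeval isHomogeneous_e,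
      eq_monomial_add_X_one_mul_divMonomial rfl
        (weightedHomogeneousComponent_isWeightedHomogeneous j P), hR, ← C_mul_X_pow_eq_monomial,
      map_add, map_mul, map_mul, map_pow, aeval_C, aeval_X, aeval_X, algebraMap_eq]
    rfl

/-- For `1 ≤ j ≤ d`, the Chern class `c_j(Sym^d)` of a rank-2 bundle equals
`a_j·c₁^j` with `a_j > 0` plus `c₂` times a polynomial in `c₁, c₂` with
nonnegative coefficients. -/
theorem stmt4 (d j : ℕ) (hd : 1 ≤ d) (hj1 : 1 ≤ j) (hjd : j ≤ d) :
    ∃ (a : ℤ) (Q : MvPolynomial (Fin 2) ℤ),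
      0 < a ∧ (∀ m, 0 ≤ Q.coeff m) ∧
      MvPolynomial.homogeneousComponent j (F d) =
        C a * e1 ^ j + e2 * MvPolynomial.aeval ![e1, e2] Q :=
  stmt4_general d j hjd
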